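/- Fix 0 < ξ < 1 and k' > 0, and let m = ⌈n/(log n)^ξ⌉. There exist a > 0 and n₀ ∈ ℕ such that for all n ≥ n₀ and every vector c ∈ ℝ^n with Σ_{j=1}^n c_j² ≥ k'·n, the random matrix H ∈ ℝ^{m×n} with i.i.d. standard Gaussian N(0,1) entries satisfies P( ‖Hc‖² < a·n·(log n)^{1−ξ} ) ≤ exp(−a·n·(log n)^{1−ξ}). -/

import Mathlib

open MeasureTheory ProbabilityTheory Real Set
open scoped NNReal ENNReal

noncomputable def euclNorm {m : ℕ} (v : Fin m → ℝ) : ℝ := Real.sqrt (∑ i, (v i)^2)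

noncomputable def mulVec' {m n : ℕ} (H : Fin m → Fin n → ℝ) (x : Fin n → ℝ) : Fin m → ℝ :=
  fun i => ∑ j, H i j * x j

noncomputable def sgn (t : ℝ) : ℝ := if 0 < t then 1 else -1

def cube (n : ℕ) : Set (Fin n → ℝ) := {x | ∀ i, x i ∈ Set.Icc (-1:ℝ) 1}

noncomputable def resid {m n : ℕ} (H : Fin m → Fin n → ℝ) (y : Fin m → ℝ) (x : Fin n → ℝ) : ℝ :=
  euclNorm (fun i => y i - mulVec' H x i)

def solSet {m n : ℕ} (H : Fin m → Fin n → ℝ) (y : Fin m → ℝ) : Set (Fin n → ℝ) :=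
  {x | x ∈ cube n ∧ ∀ z ∈ cube n, resid H y x ≤ resid H y z}

noncomputable def gaussianH (m n : ℕ) : Measure (Fin m → Fin n → ℝ) :=
  Measure.pi fun _ => Measure.pi fun _ => gaussianReal 0 1

noncomputable def gaussianNoise (m : ℕ) (σ : ℝ) : Measure (Fin m → ℝ) :=
  Measure.pi fun _ => gaussianReal 0 (Real.toNNReal (σ^2))

noncomputable def unifIcc : Measure ℝ := ((2:ℝ≥0)⁻¹) • volume.restrict (Set.Icc (-1:ℝ) 1)

noncomputable def unifCube (n : ℕ) : Measure (Fin n → ℝ) := Measure.pi fun _ => unifIcc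


instance gaussianNoise.instProb (m : ℕ) (σ : ℝ) : IsProbabilityMeasure (gaussianNoise m σ) := by
  unfold gaussianNoise; infer_instance

instance gaussianH.instProb (m n : ℕ) : IsProbabilityMeasure (gaussianH m n) := by
  unfold gaussianH; infer_instance

instance unifIcc.instProb : IsProbabilityMeasure unifIcc := by
  constructor
  simp [unifIcc, Measure.smul_apply, Measure.restrict_apply, Real.volume_Icc]
  rw [show ((1:ℝ) + 1) = 2 by norm_num, ENNReal.ofReal_ofNat]
  simp [ENNReal.smul_def, ENNReal.inv_mul_cancel]

instance unifCube.instProb (n : ℕ) : IsProbabilityMeasure (unifCube n) := by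
  unfold unifCube; infer_instance

lemma gaussianPDFReal_le (μ : ℝ) (v : ℝ≥0) (x : ℝ) :
    gaussianPDFReal μ v x ≤ (Real.sqrt (2 * π * v))⁻¹ := by
  rw [gaussianPDFReal]
  nth_rewrite 2 [← mul_one ((Real.sqrt (2 * π * (v:ℝ)))⁻¹)]
  gcongr
  rw [Real.exp_le_one_iff]
  apply div_nonpos_of_nonpos_of_nonneg
  · exact neg_nonpos_of_nonneg (sq_nonneg _)
  · positivity

lemma gaussian_conv_pdf (v w : ℝ≥0) (hv : v ≠ 0) (hw : w ≠ 0) (u : ℝ) :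
    ∫ x, gaussianPDFReal 0 v x * gaussianPDFReal 0 w (u - x)
      = gaussianPDFReal 0 (v + w) u := by
  have hv' : 0 < (v:ℝ) := by exact_mod_cast pos_iff_ne_zero.2 hv
  have hw' : 0 < (w:ℝ) := by exact_mod_cast pos_iff_ne_zero.2 hw
  set V := (v:ℝ) with hV
  set W := (w:ℝ) with hW
  have hA : 0 < (V+W)/(2*V*W) := by positivity
  set A := (V+W)/(2*V*W) with hAdef
  set B := u*V/(V+W) with hBdef
  have key : (fun x => gaussianPDFReal 0 v x * gaussianPDFReal 0 w (u - x))
      = fun x => ((Real.sqrt (2*π*V))⁻¹ * (Real.sqrt (2*π*W))⁻¹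
          * Real.exp (-u^2/(2*(V+W)))) * Real.exp (-(A*(x-B)^2)) := by
    funext x
    simp only [gaussianPDFReal, sub_zero]
    rw [mul_mul_mul_comm, ← Real.exp_add,
      mul_assoc ((Real.sqrt (2*π*V))⁻¹ * (Real.sqrt (2*π*W))⁻¹)
        (Real.exp (-u^2/(2*(V+W)))) (Real.exp (-(A*(x-B)^2))), ← Real.exp_add]
    congr 1
    congr 1
    rw [hAdef, hBdef, ← hV, ← hW]
    field_simp
    ring
  rw [key, integral_const_mul]
  have hint : ∫ x, Real.exp (-(A*(x-B)^2)) = Real.sqrt (π / A) := by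
    have h1 : (fun x => Real.exp (-(A*(x-B)^2))) = fun x => Real.exp (-A*(x-B)^2) := by
      funext x; ring_nf
    rw [h1]
    rw [integral_sub_right_eq_self (fun x => Real.exp (-A*x^2)) B]
    exact integral_gaussian A
  rw [hint, gaussianPDFReal]
  have hcoe : ((v + w : ℝ≥0) : ℝ) = V + W := by push_cast; ring
  rw [hcoe, sub_zero]
  rw [show (Real.sqrt (2*π*V))⁻¹ * (Real.sqrt (2*π*W))⁻¹ * Real.exp (-u^2/(2*(V+W)))
      * Real.sqrt (π / A)
      = ((Real.sqrt (2*π*V))⁻¹ * (Real.sqrt (2*π*W))⁻¹ * Real.sqrt (π / A))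
        * Real.exp (-u^2/(2*(V+W))) by ring]
  congr 1
  rw [← Real.sqrt_inv, ← Real.sqrt_inv, ← Real.sqrt_mul (by positivity),
    ← Real.sqrt_mul (by positivity), ← Real.sqrt_inv]
  congr 1
  rw [hAdef]
  field_simp

lemma gaussian_conv_lintegral (v w : ℝ≥0) (hv : v ≠ 0) (hw : w ≠ 0) (u : ℝ) :
    ∫⁻ x, gaussianPDF 0 v x * gaussianPDF 0 w (u - x) = gaussianPDF 0 (v + w) u := by
  have hInt : Integrable (fun x => gaussianPDFReal 0 v x * gaussianPDFReal 0 w (u - x)) := by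
    apply Integrable.mono' ((integrable_gaussianPDFReal 0 v).const_mul ((Real.sqrt (2*π*w))⁻¹))
    · exact ((measurable_gaussianPDFReal 0 v).mul ((measurable_gaussianPDFReal 0 w).comp
        (measurable_const.sub measurable_id))).aestronglyMeasurable
    · refine ae_of_all _ fun x => ?_
      rw [Real.norm_eq_abs, abs_of_nonneg (mul_nonneg (gaussianPDFReal_nonneg _ _ _)
        (gaussianPDFReal_nonneg _ _ _)), mul_comm ((Real.sqrt (2*π*(w:ℝ)))⁻¹)]
      gcongr
      · exact gaussianPDFReal_nonneg _ _ _
      · exact gaussianPDFReal_le _ _ _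
  simp only [gaussianPDF]
  simp_rw [← ENNReal.ofReal_mul (gaussianPDFReal_nonneg 0 v _)]
  rw [← ofReal_integral_eq_lintegral_ofReal hInt (ae_of_all _ fun x =>
    mul_nonneg (gaussianPDFReal_nonneg _ _ _) (gaussianPDFReal_nonneg _ _ _))]
  rw [gaussian_conv_pdf v w hv hw u]

lemma gaussian_conv_measure (v w : ℝ≥0) :
    ((gaussianReal 0 v).prod (gaussianReal 0 w)).map (fun p : ℝ × ℝ => p.1 + p.2)
      = gaussianReal 0 (v + w) := by
  by_cases hv : v = 0
  · subst hv
    rw [gaussianReal_zero_var, Measure.dirac_prod, zero_add,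
      Measure.map_map measurable_add measurable_prodMk_left]
    rw [show ((fun p : ℝ×ℝ => p.1 + p.2) ∘ (Prod.mk (0:ℝ))) = ((0:ℝ) + ·) from rfl,
      gaussianReal_map_const_add]
    norm_num
  by_cases hw : w = 0
  · subst hw
    rw [gaussianReal_zero_var, Measure.prod_dirac, add_zero,
      Measure.map_map measurable_add
        (show Measurable fun x : ℝ => (x, (0:ℝ)) from measurable_id.prodMk measurable_const)]
    rw [show ((fun p : ℝ×ℝ => p.1 + p.2) ∘ (fun x : ℝ => (x, (0:ℝ)))) = (· + (0:ℝ)) from rfl,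
      gaussianReal_map_add_const]
    norm_num
  have hvw : v + w ≠ 0 := by simp [hv]
  ext s hs
  rw [Measure.map_apply measurable_add hs, Measure.prod_apply (measurable_add hs)]
  have h1 : ∀ x : ℝ, (gaussianReal 0 w) (Prod.mk x ⁻¹' ((fun p : ℝ×ℝ => p.1 + p.2) ⁻¹' s))
      = ∫⁻ y, s.indicator (gaussianPDF x w) y := by
    intro x
    have he : Prod.mk x ⁻¹' ((fun p : ℝ×ℝ => p.1 + p.2) ⁻¹' s) = (x + ·) ⁻¹' s := rfl
    rw [he, ← Measure.map_apply (measurable_const_add x) hs, gaussianReal_map_const_add,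
      zero_add, gaussianReal_apply _ hw, ← lintegral_indicator hs]
  simp_rw [h1]
  have hmeas1 : ∀ x : ℝ, Measurable fun y => s.indicator (gaussianPDF x w) y :=
    fun x => (measurable_gaussianPDF x w).indicator hs
  have h15 : ∀ x : ℝ, gaussianPDF 0 v x * (∫⁻ y, s.indicator (gaussianPDF x w) y)
      = ∫⁻ y, gaussianPDF 0 v x * s.indicator (gaussianPDF x w) y :=
    fun x => (lintegral_const_mul _ (hmeas1 x)).symm
  have hG : Measurable (fun p : ℝ × ℝ => gaussianPDF p.1 w p.2) := by
    unfold gaussianPDF gaussianPDFReal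
    measurability
  have hGind : Measurable (fun p : ℝ × ℝ => s.indicator (gaussianPDF p.1 w) p.2) := by
    have he : (fun p : ℝ × ℝ => s.indicator (gaussianPDF p.1 w) p.2)
        = Set.indicator (Prod.snd ⁻¹' s) (fun p => gaussianPDF p.1 w p.2) := by
      ext p; by_cases hp : p.2 ∈ s <;> simp [Set.indicator, hp]
    rw [he]; exact hG.indicator (measurable_snd hs)
  have hF : Measurable fun x => ∫⁻ y, s.indicator (gaussianPDF x w) y :=
    Measurable.lintegral_prod_right' hGind
  rw [gaussianReal_of_var_ne_zero 0 hv,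
    lintegral_withDensity_eq_lintegral_mul _ (measurable_gaussianPDF 0 v) hF]
  simp only [Pi.mul_apply]
  simp_rw [h15]
  rw [lintegral_lintegral_swap (((measurable_gaussianPDF 0 v).comp measurable_fst).mul
    hGind).aemeasurable]
  have h2 : ∀ y : ℝ, (∫⁻ x, gaussianPDF 0 v x * s.indicator (gaussianPDF x w) y)
      = s.indicator (gaussianPDF 0 (v+w)) y := by
    intro y
    by_cases hy : y ∈ s
    · simp only [Set.indicator_of_mem hy]
      have he : ∀ x : ℝ, gaussianPDF x w y = gaussianPDF 0 w (y - x) := by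
        intro x
        unfold gaussianPDF
        rw [gaussianPDFReal_sub, zero_add]
      simp_rw [he]
      exact gaussian_conv_lintegral v w hv hw y
    · simp [Set.indicator_of_notMem hy]
  simp_rw [h2]
  rw [lintegral_indicator hs, ← gaussianReal_apply 0 hvw s]

lemma map_pi_sum : ∀ (n : ℕ) (c : Fin n → ℝ),
    (Measure.pi fun _ : Fin n => gaussianReal 0 1).map (fun r => ∑ j, c j * r j)
      = gaussianReal 0 ⟨∑ j, (c j)^2, Finset.sum_nonneg fun _ _ => sq_nonneg _⟩ := by
  intro n
  induction n with
  | zero =>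
    intro c
    have h : (fun r : Fin 0 → ℝ => ∑ j, c j * r j) = fun _ => (0:ℝ) := by
      funext r; simp
    have h0 : (⟨∑ j, (c j)^2, Finset.sum_nonneg fun _ _ => sq_nonneg _⟩ : ℝ≥0) = 0 := by
      ext; simp
    rw [h, h0, Measure.map_const, measure_univ, one_smul]; exact (gaussianReal_zero_var _).symm
  | succ n ih =>
    intro c
    have hmp := measurePreserving_piFinSuccAbove (fun _ : Fin (n+1) => gaussianReal 0 1) 0
    set e := MeasurableEquiv.piFinSuccAbove (fun _ : Fin (n+1) => ℝ) 0 with he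
    have hcomp : (fun r : Fin (n+1) → ℝ => ∑ j, c j * r j)
        = (fun p : ℝ × (Fin n → ℝ) => c 0 * p.1 + ∑ j, c j.succ * p.2 j) ∘ e := by
      funext r
      simp only [Function.comp_apply, he, MeasurableEquiv.piFinSuccAbove_apply,
        Fin.succAbove_zero]
      rw [Fin.sum_univ_succ]
      rfl
    have hg : Measurable (fun p : ℝ × (Fin n → ℝ) => c 0 * p.1 + ∑ j, c j.succ * p.2 j) := by
      apply Measurable.add
      · exact measurable_fst.const_mul _
      · exact Finset.measurable_sum _ fun j _ => ((measurable_pi_apply j).comp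
          measurable_snd).const_mul _
    rw [hcomp, ← Measure.map_map hg e.measurable, hmp.map_eq]
    have hsplit : (fun p : ℝ × (Fin n → ℝ) => c 0 * p.1 + ∑ j, c j.succ * p.2 j)
        = (fun q : ℝ × ℝ => q.1 + q.2)
          ∘ (Prod.map (fun x => c 0 * x) (fun r : Fin n → ℝ => ∑ j, c j.succ * r j)) := rfl
    have hf1 : Measurable fun x : ℝ => c 0 * x := measurable_id.const_mul _
    have hf2 : Measurable fun r : Fin n → ℝ => ∑ j, c j.succ * r j :=
      Finset.measurable_sum _ fun j _ => (measurable_pi_apply j).const_mul _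
    rw [hsplit, ← Measure.map_map measurable_add (hf1.prodMap hf2),
      ← Measure.map_prod_map _ _ hf1 hf2,
      show (fun x : ℝ => c 0 * x) = (c 0 * ·) from rfl,
      gaussianReal_map_const_mul, ih (fun j => c j.succ), mul_zero]
    erw [gaussian_conv_measure]
    congr 1
    ext
    push_cast
    show c 0 ^ 2 * 1 + ∑ j : Fin n, c j.succ ^ 2 = ∑ j, c j ^ 2
    rw [Fin.sum_univ_succ]
    ring

lemma row_small_ball (n : ℕ) (c : Fin n → ℝ) (ε : ℝ)
    (hc : (0:ℝ) < ∑ j, (c j)^2) :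
    (Measure.pi fun _ : Fin n => gaussianReal 0 1) {r | (∑ j, c j * r j)^2 < ε}
      ≤ ENNReal.ofReal (2 * Real.sqrt ε * (Real.sqrt (2 * π * (∑ j, (c j)^2)))⁻¹) := by
  set V : ℝ≥0 := ⟨∑ j, (c j)^2, le_of_lt hc⟩ with hV
  have hVne : V ≠ 0 := by
    intro h
    rw [hV] at h
    exact hc.ne' (congrArg NNReal.toReal h)
  have hmeas : Measurable fun r : Fin n → ℝ => ∑ j, c j * r j :=
    Finset.measurable_sum _ fun j _ => (measurable_pi_apply j).const_mul _
  have hset : MeasurableSet {x : ℝ | x^2 < ε} :=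
    measurableSet_lt (by measurability) measurable_const
  have h1 : {r : Fin n → ℝ | (∑ j, c j * r j)^2 < ε}
      = (fun r => ∑ j, c j * r j) ⁻¹' {x | x^2 < ε} := rfl
  rw [h1, ← Measure.map_apply hmeas hset, map_pi_sum n c, gaussianReal_apply 0 hVne]
  calc ∫⁻ x in {x | x^2 < ε}, gaussianPDF 0 V x
      ≤ ∫⁻ x in {x : ℝ | x^2 < ε}, ENNReal.ofReal ((Real.sqrt (2*π*(V:ℝ)))⁻¹) := by
        apply lintegral_mono
        intro x
        exact ENNReal.ofReal_le_ofReal (gaussianPDFReal_le _ _ _)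
    _ = ENNReal.ofReal ((Real.sqrt (2*π*(V:ℝ)))⁻¹) * volume {x : ℝ | x^2 < ε} := by
        rw [setLIntegral_const]
    _ ≤ ENNReal.ofReal ((Real.sqrt (2*π*(V:ℝ)))⁻¹) * ENNReal.ofReal (2 * Real.sqrt ε) := by
        gcongr
        have hsub : {x : ℝ | x^2 < ε} ⊆ Set.Ioo (-(Real.sqrt ε)) (Real.sqrt ε) := by
          intro x hx
          have hax : |x| < Real.sqrt ε := by
            rw [← Real.sqrt_sq_eq_abs]
            exact Real.sqrt_lt_sqrt (sq_nonneg _) hx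
          exact Set.mem_Ioo.2 (abs_lt.1 hax)
        calc volume {x:ℝ | x^2 < ε} ≤ volume (Set.Ioo (-(Real.sqrt ε)) (Real.sqrt ε)) :=
              measure_mono hsub
          _ = ENNReal.ofReal (Real.sqrt ε - -(Real.sqrt ε)) := Real.volume_Ioo
          _ ≤ ENNReal.ofReal (2 * Real.sqrt ε) := by
              exact ENNReal.ofReal_le_ofReal (le_of_eq (by ring))
    _ = ENNReal.ofReal (2 * Real.sqrt ε * (Real.sqrt (2*π*(∑ j, (c j)^2)))⁻¹) := by
        rw [← ENNReal.ofReal_mul (by positivity)]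
        rw [mul_comm]
        rfl

noncomputable def gaussianH' (m n : ℕ) : Measure (Fin m → Fin n → ℝ) :=
  Measure.pi fun _ => Measure.pi fun _ => gaussianReal 0 1

lemma gaussH_cylinder (m n : ℕ) (S : Finset (Fin m)) (B : Set (Fin n → ℝ))
    (hB : MeasurableSet B) :
    gaussianH' m n {H | ∀ i ∈ S, H i ∈ B}
      = (Measure.pi fun _ : Fin n => gaussianReal 0 1) B ^ S.card := by
  classical
  have hset : {H : Fin m → Fin n → ℝ | ∀ i ∈ S, H i ∈ B}
      = Set.pi Set.univ (fun i => if i ∈ S then B else Set.univ) := by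
    ext H
    simp only [Set.mem_pi, Set.mem_univ, forall_true_left, Set.mem_setOf_eq]
    constructor
    · intro h i
      by_cases hi : i ∈ S
      · simpa [hi] using h i hi
      · simp [hi]
    · intro h i hi
      have := h i
      rwa [if_pos hi] at this
  rw [hset]
  unfold gaussianH'
  rw [Measure.pi_pi]
  have : ∀ i : Fin m, (Measure.pi fun _ : Fin n => gaussianReal 0 1) (if i ∈ S then B else Set.univ)
      = if i ∈ S then (Measure.pi fun _ : Fin n => gaussianReal 0 1) B else 1 := by
    intro i
    by_cases hi : i ∈ S <;> simp [hi]
  simp_rw [this]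
  rw [Finset.prod_ite_mem, Finset.univ_inter, Finset.prod_const]

set_option maxHeartbeats 1000000 in
theorem gaussian_combination_lower_bound_vanishing_alpha (ξ k' : ℝ) (hξ : 0 < ξ)
    (hξ' : ξ < 1) (hk' : 0 < k') :
    ∃ a : ℝ, 0 < a ∧ ∃ n₀ : ℕ, ∀ n : ℕ, n₀ ≤ n →
      ∀ c : Fin n → ℝ, k' * n ≤ ∑ j, (c j)^2 →
      gaussianH (⌈(n : ℝ) / (Real.log n) ^ ξ⌉₊) n
        {H | (euclNorm (mulVec' H c))^2 < a * n * (Real.log n) ^ (1 - ξ)}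
        ≤ ENNReal.ofReal (Real.exp (-(a * n * (Real.log n) ^ (1 - ξ)))) := by
  classical
  set C : ℝ := 4 * (1/12) / (π * k') with hC
  have hCpos : 0 < C := by positivity
  refine ⟨1/12, by norm_num, max 4096 (⌈(6*C)^6⌉₊ + 1), fun n hn c hc => ?_⟩
  have hn4096 : (4096:ℝ) ≤ (n:ℝ) := by
    have h := le_trans (le_max_left _ _) hn
    exact_mod_cast h
  have hnC : (6*C)^6 < (n:ℝ) := by
    have h1 : ⌈(6*C)^6⌉₊ + 1 ≤ n := le_trans (le_max_right _ _) hn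
    calc (6*C)^6 ≤ (⌈(6*C)^6⌉₊:ℝ) := Nat.le_ceil _
      _ < (⌈(6*C)^6⌉₊:ℝ) + 1 := by linarith
      _ ≤ n := by exact_mod_cast h1
  have hnpos : (0:ℝ) < n := by linarith
  set L : ℝ := Real.log n with hLdef
  have hL1 : 1 < L := by
    rw [hLdef, Real.lt_log_iff_exp_lt hnpos]
    calc Real.exp 1 < 2.7182818286 := Real.exp_one_lt_d9
      _ ≤ 4096 := by norm_num
      _ ≤ n := hn4096
  have hL0 : 0 < L := by linarith
  set m : ℕ := ⌈(n : ℝ) / L ^ ξ⌉₊ with hmdef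
  have hLξpos : (0:ℝ) < L ^ ξ := Real.rpow_pos_of_pos hL0 ξ
  have hm_low : (n:ℝ) / L ^ ξ ≤ (m:ℝ) := Nat.le_ceil _
  have hmpos : 0 < m := Nat.ceil_pos.2 (by positivity)
  have hmposR : (0:ℝ) < m := by exact_mod_cast hmpos
  have hL1ξpos : (0:ℝ) < L ^ (1-ξ) := Real.rpow_pos_of_pos hL0 _
  set t : ℝ := 1/12 * n * L ^ (1 - ξ) with htdef
  have htpos : 0 < t := by rw [htdef]; positivity
  have hmL : (n:ℝ) * L ^ (1-ξ) ≤ (m:ℝ) * L := by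
    have h1 : L ^ (1-ξ) * L ^ ξ = L := by
      rw [← Real.rpow_add hL0, sub_add_cancel, Real.rpow_one]
    have h3 : (n:ℝ) * L^(1-ξ) = (n / L^ξ) * L := by
      rw [div_mul_eq_mul_div, eq_div_iff hLξpos.ne', mul_assoc, h1]
    rw [h3]
    exact mul_le_mul_of_nonneg_right hm_low (le_of_lt hL0)
  have ht12 : t ≤ (m:ℝ)*L/12 := by rw [htdef]; linarith
  set ε : ℝ := 2 * t / m with hεdef
  have hεpos : 0 < ε := by rw [hεdef]; positivity
  have hεle : ε ≤ L/6 := by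
    rw [hεdef, div_le_iff₀ hmposR]
    nlinarith
  set V : ℝ := ∑ j, (c j)^2 with hVdef
  have hVpos : 0 < V := lt_of_lt_of_le (by positivity) hc
  set q : ℝ := 2 * Real.sqrt ε * (Real.sqrt (2 * π * V))⁻¹ with hqdef
  have hq0 : 0 ≤ q := by rw [hqdef]; positivity
  have hq2 : q^2 = 4 * ε / (2*π*V) := by
    rw [hqdef, mul_pow, mul_pow, inv_pow, Real.sq_sqrt (le_of_lt hεpos),
      Real.sq_sqrt (by positivity)]
    ring
  set β : ℝ := Real.exp (-(L/3)) with hβdef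
  have hβ0 : 0 ≤ β := le_of_lt (Real.exp_pos _)
  have hβ2 : β^2 = Real.exp (-(2/3*L)) := by
    rw [hβdef, sq, ← Real.exp_add]; congr 1; ring
  -- the key smallness estimate
  have hqβ : q ≤ β := by
    have hqβ2 : q^2 ≤ β^2 := by
      rw [hq2, hβ2]
      have hA : 4*ε/(2*π*V) ≤ (2/3*L)/(2*π*(k'*n)) :=
        div_le_div₀ (by positivity) (by linarith) (by positivity)
          (mul_le_mul_of_nonneg_left hc (by positivity))
      have hB : (2/3*L)/(2*π*(k'*n)) = C*L/n := by
        rw [hC]; field_simp; ring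
      have hstep : C*L ≤ (n:ℝ)^((1:ℝ)/3) := by
        set y : ℝ := (n:ℝ) ^ ((1:ℝ)/6) with hydef
        have hypos : 0 < y := Real.rpow_pos_of_pos hnpos _
        have hy6 : y^(6:ℕ) = (n:ℝ) := by
          rw [hydef, ← Real.rpow_natCast ((n:ℝ)^((1:ℝ)/6)) 6, ← Real.rpow_mul (le_of_lt hnpos)]
          norm_num
        have hy2 : y^(2:ℕ) = (n:ℝ)^((1:ℝ)/3) := by
          rw [hydef, ← Real.rpow_natCast ((n:ℝ)^((1:ℝ)/6)) 2, ← Real.rpow_mul (le_of_lt hnpos)]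
          norm_num
        have hlogy : Real.log y = L/6 := by
          rw [hydef, Real.log_rpow hnpos]; rw [hLdef]; ring
        have hLy : L ≤ 6*y := by
          have h := Real.log_le_self (le_of_lt hypos)
          rw [hlogy] at h; linarith
        have h6C : 6*C < y := by
          apply lt_of_pow_lt_pow_left₀ 6 (le_of_lt hypos)
          rw [hy6]; exact hnC
        have hCLa : C*L ≤ C*(6*y) := mul_le_mul_of_nonneg_left hLy (le_of_lt hCpos)
        have hCLb : (6*C)*y ≤ y*y := mul_le_mul_of_nonneg_right (le_of_lt h6C) (le_of_lt hypos)
        rw [← hy2]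
        calc C*L ≤ C*(6*y) := hCLa
          _ = (6*C)*y := by ring
          _ ≤ y*y := hCLb
          _ = y^(2:ℕ) := (sq y).symm
      have hexp : Real.exp (-(2/3*L)) = (n:ℝ)^((1:ℝ)/3) / n := by
        rw [eq_div_iff hnpos.ne', Real.rpow_def_of_pos hnpos, ← hLdef]
        rw [show ((n:ℝ)) = Real.exp L from by rw [hLdef, Real.exp_log hnpos]]
        rw [← Real.exp_add]
        congr 1; ring
      rw [hexp]
      calc 4*ε/(2*π*V) ≤ (2/3*L)/(2*π*(k'*n)) := hA
        _ = C*L/n := hB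
        _ ≤ (n:ℝ)^((1:ℝ)/3)/n := by gcongr
    calc q = Real.sqrt (q^2) := (Real.sqrt_sq hq0).symm
      _ ≤ Real.sqrt (β^2) := Real.sqrt_le_sqrt hqβ2
      _ = β := Real.sqrt_sq hβ0
  -- combinatorial part
  set Bset : Set (Fin n → ℝ) := {r | (∑ j, c j * r j)^2 < ε} with hBsetdef
  set k : ℕ := m - m/2 with hkdef
  have hk2 : (m:ℝ) ≤ 2*(k:ℝ) := by
    have h : m ≤ 2*k := by omega
    exact_mod_cast h
  have hincl : {H : Fin m → Fin n → ℝ | (euclNorm (mulVec' H c))^2 < t}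
      ⊆ ⋃ S ∈ Finset.powersetCard k (Finset.univ : Finset (Fin m)),
          {H : Fin m → Fin n → ℝ | ∀ i ∈ S, H i ∈ Bset} := by
    intro H hH
    simp only [Set.mem_setOf_eq] at hH
    rw [euclNorm, Real.sq_sqrt (Finset.sum_nonneg fun _ _ => sq_nonneg _)] at hH
    set B : Finset (Fin m) := Finset.univ.filter (fun i => ε ≤ (mulVec' H c i)^2) with hBdef
    have hcard : (B.card : ℝ) * ε < t := by
      have h1 : (B.card : ℝ) * ε ≤ ∑ i ∈ B, (mulVec' H c i)^2 := by
        rw [← nsmul_eq_mul]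
        apply Finset.card_nsmul_le_sum
        intro i hi
        exact (Finset.mem_filter.1 hi).2
      have h2 : ∑ i ∈ B, (mulVec' H c i)^2 ≤ ∑ i, (mulVec' H c i)^2 :=
        Finset.sum_le_sum_of_subset_of_nonneg (Finset.subset_univ _) (fun i _ _ => sq_nonneg _)
      linarith
    have hcard2 : 2 * B.card < m := by
      have hεm : ε * m = 2*t := by rw [hεdef]; field_simp
      have hhalf : ((m:ℝ)/2) * ε = t := by linear_combination hεm / 2
      have h6 : (B.card:ℝ) * ε < ((m:ℝ)/2) * ε := by rw [hhalf]; exact hcard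
      have h7 : (B.card:ℝ) < (m:ℝ)/2 := (mul_lt_mul_iff_left₀ hεpos).1 h6
      have h5 : (2*(B.card:ℝ)) < m := by linarith
      exact_mod_cast h5
    have hkle : k ≤ (Finset.univ \ B).card := by
      rw [Finset.card_sdiff_of_subset (Finset.subset_univ _), Finset.card_univ, Fintype.card_fin]
      omega
    obtain ⟨S, hSsub, hScard⟩ := Finset.exists_subset_card_eq hkle
    refine Set.mem_iUnion₂.2 ⟨S, Finset.mem_powersetCard.2 ⟨Finset.subset_univ _, hScard⟩, ?_⟩
    intro i hi
    have hiB : i ∉ B := (Finset.mem_sdiff.1 (hSsub hi)).2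
    have hlt : (mulVec' H c i)^2 < ε := by
      by_contra hge
      exact hiB (Finset.mem_filter.2 ⟨Finset.mem_univ i, not_lt.1 hge⟩)
    have heq : (∑ j, c j * H i j) = mulVec' H c i :=
      Finset.sum_congr rfl fun j _ => mul_comm _ _
    show (∑ j, c j * H i j)^2 < ε
    rw [heq]
    exact hlt
  have hBmeas : MeasurableSet Bset := by
    have hm1 : Measurable fun r : Fin n → ℝ => (∑ j, c j * r j)^2 :=
      (Finset.measurable_sum _ fun j _ => (measurable_pi_apply j).const_mul _).pow_const 2
    exact measurableSet_lt hm1 measurable_const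
  have hrow : (Measure.pi fun _ : Fin n => gaussianReal 0 1) Bset ≤ ENNReal.ofReal q :=
    row_small_ball n c ε hVpos
  have hterm : ∀ S ∈ Finset.powersetCard k (Finset.univ : Finset (Fin m)),
      gaussianH m n {H : Fin m → Fin n → ℝ | ∀ i ∈ S, H i ∈ Bset}
        ≤ ENNReal.ofReal q ^ k := by
    intro S hS
    have := gaussH_cylinder m n S Bset hBmeas
    rw [show gaussianH m n = gaussianH' m n from rfl, this,
      (Finset.mem_powersetCard.1 hS).2]
    exact pow_le_pow_left' hrow k
  have hchain : gaussianH m n {H : Fin m → Fin n → ℝ | (euclNorm (mulVec' H c))^2 < t}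
      ≤ ENNReal.ofReal (Real.exp (-t)) := by
    refine le_trans (measure_mono hincl) (le_trans (measure_biUnion_finset_le _ _) ?_)
    refine le_trans (Finset.sum_le_sum hterm) ?_
    rw [Finset.sum_const, Finset.card_powersetCard, Finset.card_univ, Fintype.card_fin,
      nsmul_eq_mul]
    have hchoose : m.choose k ≤ 2^m := by
      calc m.choose k ≤ ∑ i ∈ Finset.range (m+1), m.choose i :=
            Finset.single_le_sum (fun i _ => Nat.zero_le _) (Finset.mem_range.2 (by omega))
        _ = 2^m := Nat.sum_range_choose m
    have hL12 : 12 * Real.log 2 ≤ L := by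
      have h1 : Real.log 4096 ≤ L := by
        rw [hLdef]
        exact (Real.log_le_log_iff (by norm_num) hnpos).2 hn4096
      have h2 : Real.log 4096 = 12 * Real.log 2 := by
        rw [show (4096:ℝ) = 2^12 by norm_num, Real.log_pow]; push_cast; ring
      linarith
    have hfinal : (2:ℝ)^m * q^k ≤ Real.exp (-t) := by
      have h2m : (2:ℝ)^m = Real.exp (m * Real.log 2) := by
        rw [Real.exp_nat_mul, Real.exp_log (by norm_num : (0:ℝ) < 2)]
      have hqk : q^k ≤ β^k := pow_le_pow_left₀ hq0 hqβ k
      have hβk : β^k = Real.exp (-((k:ℝ)*L/3)) := by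
        rw [hβdef, ← Real.exp_nat_mul]; congr 1; ring
      calc (2:ℝ)^m * q^k ≤ Real.exp (m * Real.log 2) * Real.exp (-((k:ℝ)*L/3)) := by
            rw [h2m, ← hβk]
            exact mul_le_mul_of_nonneg_left hqk (le_of_lt (Real.exp_pos _))
        _ = Real.exp ((m:ℝ)*Real.log 2 - (k:ℝ)*L/3) := by rw [← Real.exp_add]; congr 1; try ring
        _ ≤ Real.exp (-t) := by
            apply Real.exp_le_exp.2
            nlinarith [mul_le_mul_of_nonneg_left hL12 (show (0:ℝ) ≤ (m:ℝ)/12 by positivity),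
              mul_le_mul_of_nonneg_right hk2 (le_of_lt hL0)]
    calc ((m.choose k : ℕ) : ℝ≥0∞) * ENNReal.ofReal q ^ k
        ≤ ENNReal.ofReal ((2:ℝ)^m) * ENNReal.ofReal (q^k) := by
          apply mul_le_mul'
          · rw [show ENNReal.ofReal ((2:ℝ)^m) = ((2^m : ℕ) : ℝ≥0∞) by
              rw [show ((2:ℝ))^m = ((2^m : ℕ):ℝ) by push_cast; ring, ENNReal.ofReal_natCast]]
            exact_mod_cast hchoose
          · rw [ENNReal.ofReal_pow hq0]
      _ = ENNReal.ofReal ((2:ℝ)^m * q^k) := (ENNReal.ofReal_mul (by positivity)).symm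
      _ ≤ ENNReal.ofReal (Real.exp (-t)) := ENNReal.ofReal_le_ofReal hfinal
  exact hchain
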